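/- Let p ∈ ℕ and h : 𝔻 → 𝔻 be a finite Blaschke product of degree 1 ≤ deg(h) ≤ p. Then there exists an increasing function η = η_p : (0,∞) → (0,∞) with η(t) → 0 as t → 0⁺, depending only on p, with the following property: if A ⊆ 𝔻 is a connected set with 0 ∈ A and h(A) is contained in the closed hyperbolic ball of radius R > 0 centered at 0, then A is contained in the closed hyperbolic ball of radius η(R) centered at 0. -/

import Mathlib

/-
Under the Cayley transform the modulus of the Blaschke factor `φₖ(z)` is `tanh (d(z, aₖ)/2)`,
`d` the hyperbolic distance. If `h(z)` lies in the hyperbolic ball of radius `R`, one factor has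
modulus at most `tanh (R/2) ^ (1/p)`, so `z` lies within `ρ = 2 artanh (tanh (R/2) ^ (1/p))` of
some zero `aₖ`. Thus `A` is a connected set containing `0` and covered by `d ≤ p` hyperbolic balls
of radius `ρ`; such a set has radius at most `2pρ` about `0`, which tends to `0` with `R`.
-/

open Complex

/-- The closed hyperbolic ball of radius `R` centered at `0` in the unit disk, for the
hyperbolic metric `ds = 2|du|/(1−|u|²)`: it consists of `z` with `|z| ≤ tanh(R/2)`. -/
def hBall (R : ℝ) : Set ℂ := {z : ℂ | ‖z‖ ≤ Real.tanh (R / 2)}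

open Real Set Metric Filter Topology UpperHalfPlane
open scoped ComplexConjugate

theorem Real.strictMono_tanh : StrictMono tanh := by
  intro x y hxy
  by_contra! h
  have := artanh_le_artanh (neg_one_lt_tanh y) (tanh_lt_one x) h
  rw [artanh_tanh, artanh_tanh] at this
  exact this.not_gt hxy

theorem Real.tanh_pos {x : ℝ} (hx : 0 < x) : 0 < tanh x := by
  simpa [tanh_zero] using strictMono_tanh hx

theorem Real.continuous_tanh : Continuous tanh := by
  simp only [funext tanh_eq_sinh_div_cosh]
  exact continuous_sinh.div continuous_cosh fun x => (cosh_pos x).ne'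

theorem Real.continuousAt_artanh_zero : ContinuousAt artanh 0 := by
  unfold artanh
  fun_prop (disch := norm_num)

theorem exists_le_rpow_inv_of_prod_le {ι : Type*} [Fintype ι] [Nonempty ι] {f : ι → ℝ}
    {r : ℝ} {p : ℕ} (hr0 : 0 < r) (hr1 : r ≤ 1) (hp : Fintype.card ι ≤ p)
    (h : ∏ k, f k ≤ r) : ∃ k, f k ≤ r ^ (p⁻¹ : ℝ) := by
  by_contra! hf
  have hp0 : (0 : ℝ) < p := by exact_mod_cast Fintype.card_pos.trans_le hp
  have hlt : (r ^ (p⁻¹ : ℝ)) ^ Fintype.card ι < ∏ k, f k := by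
    simpa using Finset.prod_lt_prod_of_nonempty (fun k _ => rpow_pos_of_pos hr0 _)
      (fun k _ => hf k) Finset.univ_nonempty
  have hle : r ≤ (r ^ (p⁻¹ : ℝ)) ^ Fintype.card ι := by
    rw [← rpow_natCast, ← rpow_mul hr0.le]
    conv_lhs => rw [← rpow_one r]
    refine rpow_le_rpow_of_exponent_ge hr0 hr1 ?_
    rw [inv_mul_le_one₀ hp0]
    exact_mod_cast hp
  linarith

theorem Finset.exists_forall_notMem_Ioc_of_card_lt {ι : Type*} (s : Finset ι) (x : ι → ℝ)
    {n : ℕ} (hs : s.card < n) (c : ℝ) {w : ℝ} (hw : 0 ≤ w) :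
    ∃ j < n, ∀ k ∈ s, x k ∉ Set.Ioc (c + j * w) (c + (j + 1) * w) := by
  rcases hw.eq_or_lt with rfl | hw
  · exact ⟨0, by omega, by simp⟩
  classical
  set index : ι → ℕ := fun k => ⌈(x k - c) / w⌉₊ - 1
  obtain ⟨j, hj, hjs⟩ := Finset.exists_mem_notMem_of_card_lt_card
    (s := s.image index) (t := Finset.range n) (by simpa using Finset.card_image_le.trans_lt hs)
  refine ⟨j, Finset.mem_range.1 hj, fun k hk hxk => hjs (Finset.mem_image.2 ⟨k, hk, ?_⟩)⟩
  have hceil : ⌈(x k - c) / w⌉₊ = j + 1 := by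
    rw [Nat.ceil_eq_iff (Nat.succ_ne_zero j), lt_div_iff₀ hw, div_le_iff₀ hw]
    push_cast
    constructor <;> linarith [hxk.1, hxk.2]
  simp [index, hceil]

theorem IsPreconnected.subset_biUnion_closedBall_of_separated {X ι : Type*}
    [PseudoMetricSpace X] [Finite ι] {B : Set X} (hB : IsPreconnected B) {c : ι → X} {ρ : ℝ}
    (hcover : B ⊆ ⋃ k, closedBall (c k) ρ) {S : Set ι}
    (hsep : ∀ k ∈ S, ∀ k' ∉ S, 2 * ρ < dist (c k) (c k'))
    (hne : (B ∩ ⋃ k ∈ S, closedBall (c k) ρ).Nonempty) :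
    B ⊆ ⋃ k ∈ S, closedBall (c k) ρ := by
  have hclosed : ∀ T : Set ι, IsClosed (⋃ k ∈ T, closedBall (c k) ρ) := fun T =>
    T.toFinite.isClosed_biUnion fun k _ => isClosed_closedBall
  have hsplit : B ⊆ (⋃ k ∈ S, closedBall (c k) ρ) ∪ ⋃ k ∈ Sᶜ, closedBall (c k) ρ := by
    intro x hx
    obtain ⟨k, hk⟩ := mem_iUnion.1 (hcover hx)
    by_cases hkS : k ∈ S
    · exact Or.inl (mem_biUnion hkS hk)
    · exact Or.inr (mem_biUnion hkS hk)
  have hdisj : ∀ x, x ∉ (⋃ k ∈ S, closedBall (c k) ρ) ∩ ⋃ k ∈ Sᶜ, closedBall (c k) ρ := by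
    rintro x ⟨hxS, hxSc⟩
    obtain ⟨k, hk, hxk⟩ := mem_iUnion₂.1 hxS
    obtain ⟨k', hk', hxk'⟩ := mem_iUnion₂.1 hxSc
    have := dist_triangle_left (c k) (c k') x
    linarith [hsep k hk k' hk', mem_closedBall.1 hxk, mem_closedBall.1 hxk']
  intro x hx
  refine (hsplit hx).resolve_right fun hxV => ?_
  obtain ⟨y, -, hy⟩ := isPreconnected_closed_iff.1 hB _ _ (hclosed S) (hclosed Sᶜ) hsplit hne
    ⟨x, hx, hxV⟩
  exact hdisj y hy

theorem IsPreconnected.subset_closedBall_of_subset_iUnion_closedBall {X ι : Type*}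
    [PseudoMetricSpace X] [Fintype ι] {B : Set X} (hB : IsPreconnected B) {o : X} (ho : o ∈ B)
    {c : ι → X} {ρ : ℝ} (hcover : B ⊆ ⋃ k, closedBall (c k) ρ) :
    B ⊆ closedBall o (2 * Fintype.card ι * ρ) := by
  classical
  -- The distances from `o` to the centres leave a gap of length `2ρ`; the balls with centres
  -- before the gap are separated from the others, hence cover `B` by connectedness.
  obtain ⟨k₀, hk₀⟩ := mem_iUnion.1 (hcover ho)
  rw [mem_closedBall] at hk₀
  have : Nonempty ι := ⟨k₀⟩
  have hρ : 0 ≤ ρ := dist_nonneg.trans hk₀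
  obtain ⟨j, hj, hgap⟩ := (Finset.univ.erase k₀).exists_forall_notMem_Ioc_of_card_lt
    (fun k => dist o (c k)) (n := Fintype.card ι)
    (by rw [Finset.card_erase_of_mem (Finset.mem_univ _), Finset.card_univ]
        exact Nat.sub_lt Fintype.card_pos one_pos) ρ (by positivity : 0 ≤ 2 * ρ)
  set S : Set ι := {k | dist o (c k) ≤ ρ + j * (2 * ρ)}
  have hk₀S : k₀ ∈ S := by
    show dist o (c k₀) ≤ ρ + j * (2 * ρ)
    nlinarith [(Nat.cast_nonneg j : (0 : ℝ) ≤ j)]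
  have hfar : ∀ k ∉ S, ρ + (j + 1) * (2 * ρ) < dist o (c k) := by
    intro k hk
    have hne : k ≠ k₀ := fun h => hk (h ▸ hk₀S)
    have := hgap k (Finset.mem_erase.2 ⟨hne, Finset.mem_univ _⟩)
    simp only [mem_Ioc, not_and, not_le] at this
    exact this (not_le.1 hk)
  have hsep : ∀ k ∈ S, ∀ k' ∉ S, 2 * ρ < dist (c k) (c k') := fun k hk k' hk' => by
    have := dist_triangle o (c k) (c k')
    linarith [hfar k' hk', show dist o (c k) ≤ _ from hk]
  have hnear := hB.subset_biUnion_closedBall_of_separated hcover hsep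
    ⟨o, ho, mem_biUnion hk₀S (mem_closedBall.2 hk₀)⟩
  intro x hx
  obtain ⟨k, hk, hxk⟩ := mem_iUnion₂.1 (hnear hx)
  have hjn : (j : ℝ) + 1 ≤ Fintype.card ι := by exact_mod_cast hj
  rw [mem_closedBall]
  calc dist x o ≤ dist x (c k) + dist o (c k) := dist_triangle_right _ _ _
    _ ≤ ρ + (ρ + j * (2 * ρ)) := add_le_add (mem_closedBall.1 hxk) hk
    _ = 2 * (j + 1) * ρ := by ring
    _ ≤ 2 * Fintype.card ι * ρ := by gcongr

theorem one_sub_ne_zero_of_norm_lt_one {R : Type*} [NormedRing R] [NormOneClass R] {z : R}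
    (hz : ‖z‖ < 1) : 1 - z ≠ 0 :=
  sub_ne_zero.2 fun h => by simp [← h] at hz

/-- An isometry from the disc with the metric `2|dz|/(1 - |z|²)` onto the upper half-plane with
the metric `|dz|/Im z`. -/
noncomputable def cayley (z : ℂ) : ℂ := Complex.I * (1 + z) / (1 - z)

theorem cayley_im_pos {z : ℂ} (hz : ‖z‖ < 1) : 0 < (cayley z).im := by
  have hz2 : z.re ^ 2 + z.im ^ 2 < 1 := by
    have := Complex.sq_norm z
    rw [Complex.normSq_apply] at this
    nlinarith [norm_nonneg z]
  have hden : 0 < Complex.normSq (1 - z) :=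
    Complex.normSq_pos.2 (one_sub_ne_zero_of_norm_lt_one hz)
  have : (cayley z).im = (1 - z.re ^ 2 - z.im ^ 2) / Complex.normSq (1 - z) := by
    simp only [cayley, Complex.div_im, Complex.mul_re, Complex.mul_im, Complex.I_re,
      Complex.I_im, Complex.add_re, Complex.add_im, Complex.sub_re, Complex.sub_im,
      Complex.one_re, Complex.one_im]
    ring
  rw [this]
  exact div_pos (by linarith) hden

/-- Junk off the unit disc. -/
noncomputable def diskToUpperHalfPlane (z : ℂ) : ℍ := ofComplex (cayley z)

theorem coe_diskToUpperHalfPlane {z : ℂ} (hz : ‖z‖ < 1) :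
    (diskToUpperHalfPlane z : ℂ) = cayley z := by
  rw [diskToUpperHalfPlane, ofComplex_apply_of_im_pos (cayley_im_pos hz)]

theorem continuousOn_diskToUpperHalfPlane : ContinuousOn diskToUpperHalfPlane (ball 0 1) := by
  rw [isOpenEmbedding_coe.isInducing.continuousOn_iff]
  refine ContinuousOn.congr (f := cayley) ?_ fun z hz =>
    coe_diskToUpperHalfPlane (mem_ball_zero_iff.1 hz)
  exact (continuousOn_const.mul (continuousOn_const.add continuousOn_id)).div
    (continuousOn_const.sub continuousOn_id)
    fun z hz => one_sub_ne_zero_of_norm_lt_one (mem_ball_zero_iff.1 hz)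

theorem tanh_half_dist_diskToUpperHalfPlane {z w : ℂ} (hz : ‖z‖ < 1) (hw : ‖w‖ < 1) :
    Real.tanh (dist (diskToUpperHalfPlane z) (diskToUpperHalfPlane w) / 2) =
      ‖(z - w) / (1 - conj w * z)‖ := by
  have hz1 := one_sub_ne_zero_of_norm_lt_one hz
  have hw1 := one_sub_ne_zero_of_norm_lt_one hw
  have hw1' : 1 - conj w ≠ 0 :=
    one_sub_ne_zero_of_norm_lt_one (by rwa [Complex.norm_conj])
  have hwz : 1 - conj w * z ≠ 0 :=
    one_sub_ne_zero_of_norm_lt_one (by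
      rw [norm_mul, Complex.norm_conj]
      nlinarith [norm_nonneg z, norm_nonneg w])
  have hquot : (cayley z - cayley w) / (cayley z - conj (cayley w)) =
      (z - w) / (1 - conj w * z) * ((1 - conj w) / (1 - w)) := by
    have hnum : cayley z - cayley w = 2 * Complex.I * (z - w) / ((1 - z) * (1 - w)) := by
      rw [cayley, cayley, div_sub_div _ _ hz1 hw1]
      ring
    have hden : cayley z - conj (cayley w) =
        2 * Complex.I * (1 - conj w * z) / ((1 - z) * (1 - conj w)) := by
      simp only [cayley, map_div₀, map_mul, map_add, map_sub, map_one, Complex.conj_I]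
      rw [div_sub_div _ _ hz1 hw1']
      ring
    rw [hnum, hden]
    field_simp
  have hunit : ‖(1 - conj w) / (1 - w)‖ = 1 := by
    rw [norm_div, ← Complex.norm_conj (1 - w), map_sub, map_one, div_self]
    exact norm_ne_zero_iff.2 hw1'
  rw [tanh_half_dist, coe_diskToUpperHalfPlane hz, coe_diskToUpperHalfPlane hw,
    Complex.dist_eq, Complex.dist_eq, ← norm_div, hquot, norm_mul, hunit, mul_one]

theorem mem_hBall_iff_dist_diskToUpperHalfPlane_le {z : ℂ} (hz : ‖z‖ < 1) (R : ℝ) :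
    z ∈ hBall R ↔ dist (diskToUpperHalfPlane z) (diskToUpperHalfPlane 0) ≤ R := by
  have h := tanh_half_dist_diskToUpperHalfPlane hz (norm_zero.trans_lt one_pos)
  simp only [sub_zero, map_zero, zero_mul, div_one] at h
  rw [hBall, mem_ofPred_eq, ← h, strictMono_tanh.le_iff_le]
  constructor <;> intro <;> linarith

/-- The hyperbolic radius of the disc `|w| ≤ tanh (R/2) ^ (1/p)`: when a product of at most `p`
Blaschke factors lies in `hBall R`, one of the factors lies in this disc. -/
noncomputable def rootRadius (p : ℕ) (R : ℝ) : ℝ := 2 * artanh (Real.tanh (R / 2) ^ (p⁻¹ : ℝ))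

section rootRadius

variable {p : ℕ} {R : ℝ}

theorem tanh_half_rpow_inv_mem_Ioo (hp : 0 < p) (hR : 0 < R) :
    Real.tanh (R / 2) ^ (p⁻¹ : ℝ) ∈ Ioo 0 1 := by
  have htanh := tanh_pos (half_pos hR)
  exact ⟨rpow_pos_of_pos htanh _, rpow_lt_one htanh.le (tanh_lt_one _) (by positivity)⟩

theorem tanh_half_rootRadius (hp : 0 < p) (hR : 0 < R) :
    Real.tanh (rootRadius p R / 2) = Real.tanh (R / 2) ^ (p⁻¹ : ℝ) := by
  obtain ⟨h0, h1⟩ := tanh_half_rpow_inv_mem_Ioo hp hR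
  rw [rootRadius, mul_div_cancel_left₀ _ two_ne_zero, tanh_artanh ⟨by linarith, h1⟩]

theorem rootRadius_pos (hp : 0 < p) (hR : 0 < R) : 0 < rootRadius p R :=
  mul_pos two_pos (artanh_pos (tanh_half_rpow_inv_mem_Ioo hp hR))

theorem rootRadius_le_rootRadius (hp : 0 < p) {S : ℝ} (hR : 0 < R) (hRS : R ≤ S) :
    rootRadius p R ≤ rootRadius p S := by
  have hR' := tanh_half_rpow_inv_mem_Ioo hp hR
  have hS' := tanh_half_rpow_inv_mem_Ioo hp (hR.trans_le hRS)
  unfold rootRadius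
  gcongr 2 * ?_
  refine artanh_le_artanh (by linarith [hR'.1]) hS'.2 ?_
  exact rpow_le_rpow (tanh_pos (half_pos hR)).le (strictMono_tanh.monotone (by linarith))
    (by positivity)

theorem tendsto_rootRadius (hp : p ≠ 0) : Tendsto (rootRadius p) (𝓝[>] 0) (𝓝 0) := by
  have htanh : Tendsto (fun R => Real.tanh (R / 2)) (𝓝 0) (𝓝 0) := by
    simpa [Function.comp_def, Real.tanh_zero] using
      (continuous_tanh.comp (continuous_id.div_const 2)).tendsto 0
  have hrpow : Tendsto (fun x : ℝ => x ^ (p⁻¹ : ℝ)) (𝓝 0) (𝓝 0) := by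
    simpa [zero_rpow, hp] using
      (continuousAt_rpow_const 0 (p⁻¹ : ℝ) (Or.inr (by positivity))).tendsto
  have hartanh : Tendsto artanh (𝓝 0) (𝓝 0) := by
    simpa [artanh_zero] using continuousAt_artanh_zero.tendsto
  have h := (hartanh.comp (hrpow.comp htanh)).const_mul 2
  rw [mul_zero] at h
  exact h.mono_left nhdsWithin_le_nhds

end rootRadius

theorem exists_dist_diskToUpperHalfPlane_le_rootRadius {ι : Type*} [Fintype ι] [Nonempty ι]
    {p : ℕ} (hp : Fintype.card ι ≤ p) (θ : ℝ) {a : ι → ℂ} (ha : ∀ k, ‖a k‖ < 1) {z : ℂ}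
    (hz : ‖z‖ < 1) {R : ℝ} (hR : 0 < R)
    (hzR : Complex.exp (θ * Complex.I) * ∏ k, (z - a k) / (1 - conj (a k) * z) ∈ hBall R) :
    ∃ k, dist (diskToUpperHalfPlane z) (diskToUpperHalfPlane (a k)) ≤ rootRadius p R := by
  have hp0 : 0 < p := Fintype.card_pos.trans_le hp
  have hprod : ∏ k, Real.tanh (dist (diskToUpperHalfPlane z) (diskToUpperHalfPlane (a k)) / 2)
      ≤ Real.tanh (R / 2) := by
    simpa only [hBall, mem_ofPred_eq, norm_mul, Complex.norm_exp_ofReal_mul_I, one_mul,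
      norm_prod, ← tanh_half_dist_diskToUpperHalfPlane hz (ha _)] using hzR
  obtain ⟨k, hk⟩ := exists_le_rpow_inv_of_prod_le (tanh_pos (half_pos hR))
    (tanh_lt_one _).le hp hprod
  rw [← tanh_half_rootRadius hp0 hR, strictMono_tanh.le_iff_le] at hk
  exact ⟨k, by linarith⟩

/-- Distortion lemma for finite Blaschke products: for each `p ∈ ℕ` there is a distortion
function `η = η_p` (increasing, positive, `η(t) → 0` as `t → 0⁺`) such that for every
finite Blaschke product `h` of degree `≤ p` and every connected set `A ⊆ 𝔻` with `0 ∈ A`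
and `h(A)` contained in the closed hyperbolic ball of radius `R` centered at `0`, the set
`A` is contained in the closed hyperbolic ball of radius `η(R)` centered at `0`. -/
theorem stmt17 (p : ℕ) (hp : 1 ≤ p) :
    ∃ η : ℝ → ℝ,
      (∀ s t : ℝ, 0 < s → s ≤ t → η s ≤ η t) ∧
      (∀ t : ℝ, 0 < t → 0 < η t) ∧
      Filter.Tendsto η (nhdsWithin 0 (Set.Ioi 0)) (nhds 0) ∧
      ∀ (h : ℂ → ℂ) (d : ℕ) (θ : ℝ) (a : Fin d → ℂ),
        1 ≤ d → d ≤ p →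
        (∀ k, ‖a k‖ < 1) →
        (∀ z : ℂ, h z =
          Complex.exp ((θ : ℂ) * Complex.I) *
            ∏ k, (z - a k) / (1 - (starRingEnd ℂ) (a k) * z)) →
        ∀ (R : ℝ) (A : Set ℂ), 0 < R →
          IsConnected A → A ⊆ Metric.ball (0 : ℂ) 1 → (0 : ℂ) ∈ A →
          h '' A ⊆ hBall R →
          A ⊆ hBall (η R) := by
  refine ⟨fun R => 2 * p * rootRadius p R, fun s t hs hst => ?_, fun t ht => ?_, ?_, ?_⟩
  · exact mul_le_mul_of_nonneg_left (rootRadius_le_rootRadius hp hs hst) (by positivity)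
  · exact mul_pos (by positivity) (rootRadius_pos hp ht)
  · simpa using (tendsto_rootRadius (Nat.one_le_iff_ne_zero.1 hp)).const_mul (2 * p : ℝ)
  intro h d θ a hd hdp ha hh R A hR hA hAdisk h0 himg
  have : Nonempty (Fin d) := ⟨⟨0, hd⟩⟩
  have hcover : diskToUpperHalfPlane '' A ⊆
      ⋃ k, closedBall (diskToUpperHalfPlane (a k)) (rootRadius p R) := by
    rintro _ ⟨z, hz, rfl⟩
    obtain ⟨k, hk⟩ := exists_dist_diskToUpperHalfPlane_le_rootRadius
      (by simpa using hdp) θ ha (mem_ball_zero_iff.1 (hAdisk hz)) hR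
      (hh z ▸ himg (mem_image_of_mem h hz))
    exact mem_iUnion.2 ⟨k, hk⟩
  have hball := (hA.isPreconnected.image _
    (continuousOn_diskToUpperHalfPlane.mono hAdisk)).subset_closedBall_of_subset_iUnion_closedBall
    (mem_image_of_mem _ h0) hcover
  intro z hz
  rw [mem_hBall_iff_dist_diskToUpperHalfPlane_le (mem_ball_zero_iff.1 (hAdisk hz))]
  calc dist (diskToUpperHalfPlane z) (diskToUpperHalfPlane 0)
      ≤ 2 * d * rootRadius p R := by simpa using hball (mem_image_of_mem _ hz)
    _ ≤ 2 * p * rootRadius p R := by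
      gcongr
      exact (rootRadius_pos hp hR).le
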